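/- Let K₁, …, K_n ⊆ ℝ^d be open bounded convex sets such that D = ⋃_{i=1}^n K_i is connected and for every pair i ≠ j either the closures satisfy cl(K_i) ∩ cl(K_j) = ∅ or |K_i ∩ K_j| > 0. Then D satisfies Condition B. -/

import Mathlib

/-!
In dimension `0` every point sees every other one. Otherwise fix pairwise `ρ`-separated centers
whose `ρ`-balls lie in the nonempty overlaps `K i ∩ K j`, two of them in every piece. Let
`x ∈ K a` and `y ∈ K b` with `y` not visible from `x`, so that `a ≠ b`.

* If `|x - y| ≤ θ` for a small `θ`, the two pieces meet (pieces with disjoint closures are a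
  positive distance apart), and shrinking the center ball of `K a ∩ K b` towards `x` and
  towards `y` by the factor `3 |x - y| / ρ` yields, by convexity, a ball of radius `2 |x - y|`
  in `K a ∩ K b` at distance comparable to `|x - y|` from both points: one cube suffices.
* If `|x - y| > θ`, connectedness gives a path `a = k₀, …, k_L = b` of overlapping pieces, and
  fixed cubes at centers of `K a`, of the overlaps `K k_{j-1} ∩ K k_j` and of `K b` (the two
  end ones far from `x` and `y`) form a chain of at most `n + 1` cubes. Since `|x - y|` ranges
  over `(θ, diam D]`, all these fixed sizes and distances are comparable to `|x - y|`.
-/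

open MeasureTheory Metric Set ENNReal Filter

noncomputable section

abbrev Euc (d : ℕ) := EuclideanSpace ℝ (Fin d)

/-- The visible region of `x` in `D`: the points `y ∈ D` such that the open line segment
between `x` and `y` is contained in `D`. -/
def visible {d : ℕ} (D : Set (Euc d)) (x : Euc d) : Set (Euc d) :=
  {y ∈ D | ∀ t : ℝ, t ∈ Set.Ioo (0:ℝ) 1 → t • x + (1 - t) • y ∈ D}

/-- An axis-parallel cube with side length `l`. -/
def IsCube {d : ℕ} (Q : Set (Euc d)) (l : ℝ) : Prop :=
  ∃ a : Euc d, Q = {z : Euc d | ∀ i, a i ≤ z i ∧ z i ≤ a i + l}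

/-- Distance between two sets. -/
def setDist {d : ℕ} (A B : Set (Euc d)) : ℝ := sInf (Set.image2 dist A B)

/-- Condition B: for a.e. `x ∈ D` and a.e. `y ∈ D ∖ D_x` there is a chain of at most `N`
cubes of side length comparable to `|x - y|` joining the visible regions of `x` and `y`,
with consecutive cubes mutually visible and at distance comparable to `|x - y|`. -/
def ConditionB {d : ℕ} (D : Set (Euc d)) : Prop :=
  ∃ N : ℕ, ∃ c : ℝ, 1 ≤ c ∧
    ∀ᵐ x ∂(volume.restrict D), ∀ᵐ y ∂(volume.restrict (D \ visible D x)),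
      ∃ m : ℕ, 1 ≤ m ∧ m ≤ N ∧ ∃ Q : ℕ → Set (Euc d), ∃ l : ℕ → ℝ,
        (∀ i < m, Q i ⊆ D ∧ IsCube (Q i) (l i) ∧
          c⁻¹ * ‖x - y‖ ≤ l i ∧ l i ≤ c * ‖x - y‖) ∧
        Q 0 ⊆ visible D x ∧ Q (m - 1) ⊆ visible D y ∧
        c⁻¹ * ‖x - y‖ ≤ Metric.infDist x (Q 0) ∧ Metric.infDist x (Q 0) ≤ c * ‖x - y‖ ∧
        c⁻¹ * ‖x - y‖ ≤ Metric.infDist y (Q (m - 1)) ∧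
        Metric.infDist y (Q (m - 1)) ≤ c * ‖x - y‖ ∧
        ∀ i, i + 1 < m → Q (i + 1) ⊆ (⋂ z ∈ Q i, visible D z) ∧
          c⁻¹ * ‖x - y‖ ≤ setDist (Q i) (Q (i + 1)) ∧ setDist (Q i) (Q (i + 1)) ≤ c * ‖x - y‖


open Topology

theorem exists_injective_forall_mem_of_infinite {ι α : Type*} [Finite ι] {S : ι → Set α}
    (hS : ∀ i, (S i).Infinite) : ∃ f : ι → α, Function.Injective f ∧ ∀ i, f i ∈ S i := by
  classical
  have := Fintype.ofFinite ι
  choose t ht hcard using fun i => (hS i).exists_subset_card_eq (Fintype.card ι)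
  obtain ⟨f, hf, hmem⟩ := (Finset.all_card_le_biUnion_card_iff_exists_injective t).1 fun s => by
    rcases s.eq_empty_or_nonempty with rfl | ⟨i, hi⟩
    · simp
    · calc s.card ≤ Fintype.card ι := s.card_le_univ
        _ = (t i).card := (hcard i).symm
        _ ≤ (s.biUnion t).card := Finset.card_le_card (Finset.subset_biUnion_of_mem t hi)
  exact ⟨f, hf, fun i => ht i (hmem i)⟩

theorem exists_separated_centers {ι E : Type*} [Finite ι] [NormedAddCommGroup E]
    [NormedSpace ℝ E] [Nontrivial E] {U : ι → Set E} (hU : ∀ i, IsOpen (U i)) :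
    ∃ p : ι → E, ∃ ρ > 0, (∀ i, (U i).Nonempty → ball (p i) ρ ⊆ U i) ∧
      Pairwise fun i j => ρ ≤ dist (p i) (p j) := by
  classical
  set V : ι → Set E := fun i => if (U i).Nonempty then U i else univ
  have hV : ∀ i, IsOpen (V i) ∧ (V i).Nonempty := fun i => by
    by_cases h : (U i).Nonempty <;> simp [V, h, hU i]
  obtain ⟨p, hinj, hp⟩ := exists_injective_forall_mem_of_infinite fun i =>
    have ⟨v, hv⟩ := (hV i).2
    infinite_of_mem_nhds v ((hV i).1.mem_nhds hv)
  have hball : ∀ i, ∀ᶠ ρ in 𝓝[>] 0, (U i).Nonempty → ball (p i) ρ ⊆ U i := fun i => by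
    obtain ⟨ε, hε, hsub⟩ := Metric.isOpen_iff.1 (hV i).1 (p i) (hp i)
    filter_upwards [Ioo_mem_nhdsGT hε] with ρ hρ hne
    simpa [V, hne] using (ball_subset_ball hρ.2.le).trans hsub
  have hsep : ∀ i j, ∀ᶠ ρ in 𝓝[>] 0, i ≠ j → ρ ≤ dist (p i) (p j) := fun i j => by
    by_cases h : i = j
    · exact .of_forall fun _ h' => absurd h h'
    filter_upwards [Ioo_mem_nhdsGT (dist_pos.2 (hinj.ne h))] with ρ hρ _ using hρ.2.le
  obtain ⟨ρ, ⟨hb, hs⟩, hρ⟩ := (((eventually_all.2 hball).and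
    (eventually_all.2 fun i => eventually_all.2 (hsep i))).and self_mem_nhdsWithin).exists
  exact ⟨p, ρ, hρ, hb, fun i j h => hs i j h⟩

theorem eventually_inter_nonempty_of_dist_le {ι X : Type*} [Finite ι] [MetricSpace X]
    [ProperSpace X] {K : ι → Set X} (hbd : ∀ i, Bornology.IsBounded (K i))
    (hpair : ∀ i j, i ≠ j → Disjoint (closure (K i)) (closure (K j)) ∨ (K i ∩ K j).Nonempty) :
    ∀ᶠ θ in 𝓝[>] 0, ∀ i j, ∀ x ∈ K i, ∀ y ∈ K j, dist x y ≤ θ → (K i ∩ K j).Nonempty := by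
  refine eventually_all.2 fun i => eventually_all.2 fun j => ?_
  rcases (K i ∩ K j).eq_empty_or_nonempty with he | hne
  · obtain rfl | hij := eq_or_ne i j
    · exact .of_forall fun _ x hx => absurd (he.subset ⟨hx, hx⟩) (notMem_empty x)
    obtain hdis | hne := hpair i j hij
    · obtain ⟨r, hr, hsep⟩ :=
        exists_pos_forall_lt_edist (hbd i).isCompact_closure isClosed_closure hdis
      filter_upwards [Ioo_mem_nhdsGT (show (0 : ℝ) < r from hr)] with θ hθ x hx y hy hxy
      refine absurd (hsep x (subset_closure hx) y (subset_closure hy)) (not_lt.2 ?_)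
      rw [← ENNReal.ofReal_coe_nnreal]
      exact (edist_le_ofReal hr.le).2 (hxy.trans hθ.2.le)
    · exact .of_forall fun _ _ _ _ _ _ => hne
  · exact .of_forall fun _ _ _ _ _ _ => hne

section ConvexBall

variable {E : Type*} [NormedAddCommGroup E] [NormedSpace ℝ E]

theorem Convex.ball_lineMap_subset {K : Set E} (hK : Convex ℝ K) {x z : E} {ρ t : ℝ}
    (hx : x ∈ K) (hz : ball z ρ ⊆ K) (ht₀ : 0 < t) (ht₁ : t ≤ 1) :
    ball (AffineMap.lineMap x z t) (t * ρ) ⊆ K := by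
  intro w hw
  set u := z + t⁻¹ • (w - AffineMap.lineMap x z t)
  have hu : u ∈ ball z ρ := by
    rw [mem_ball, dist_eq_norm, add_sub_cancel_left, norm_smul,
      Real.norm_of_nonneg (inv_nonneg.2 ht₀.le), ← dist_eq_norm, inv_mul_lt_iff₀ ht₀]
    exact hw
  have hwu : w = (1 - t) • x + t • u := by
    rw [smul_add, smul_smul, mul_inv_cancel₀ ht₀.ne', one_smul, AffineMap.lineMap_apply_module]
    abel
  exact hwu ▸ hK hx (hz hu) (sub_nonneg.2 ht₁) ht₀.le (sub_add_cancel 1 t)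

/- `v` is the image of `z` under the homothety of center `x` and ratio `t = 3 |x - y| / ρ`; the
homothety of center `y` moves `z` to within `(1 - t) |x - y|` of `v`. -/
theorem exists_ball_subset_inter_near {K₁ K₂ : Set E} (h₁ : Convex ℝ K₁) (h₂ : Convex ℝ K₂)
    {x y z : E} {ρ : ℝ} (hx : x ∈ K₁) (hy : y ∈ K₂) (hz : ball z ρ ⊆ K₁ ∩ K₂)
    (hxz : ρ ≤ dist x z) (hyz : ρ ≤ dist y z) (hxy : 0 < dist x y) (hρ : 3 * dist x y ≤ ρ) :
    ∃ v, ball v (2 * dist x y) ⊆ K₁ ∩ K₂ ∧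
      3 * dist x y ≤ dist x v ∧ dist x v ≤ 3 * dist x y / ρ * dist x z ∧
      2 * dist x y ≤ dist y v ∧ dist y v ≤ 3 * dist x y / ρ * dist y z + dist x y := by
  set r := dist x y
  set t := 3 * r / ρ
  have hρ₀ : 0 < ρ := by linarith
  have ht₀ : 0 < t := by positivity
  have ht₁ : t ≤ 1 := (div_le_one hρ₀).2 hρ
  have htρ : t * ρ = 3 * r := div_mul_cancel₀ _ hρ₀.ne'
  set v := AffineMap.lineMap x z t
  set v' := AffineMap.lineMap y z t
  have hvv' : dist v v' ≤ r := by
    have : v - v' = (1 - t) • (x - y) := by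
      simp only [v, v', AffineMap.lineMap_apply_module]; module
    rw [dist_eq_norm, this, norm_smul, Real.norm_of_nonneg (sub_nonneg.2 ht₁), ← dist_eq_norm]
    exact mul_le_of_le_one_left hxy.le (by linarith)
  have hxv : dist x v = t * dist x z := by rw [dist_left_lineMap, Real.norm_of_nonneg ht₀.le]
  have hyv' : dist y v' = t * dist y z := by rw [dist_left_lineMap, Real.norm_of_nonneg ht₀.le]
  have hyv'₃ : 3 * r ≤ dist y v' := hyv' ▸ htρ ▸ mul_le_mul_of_nonneg_left hyz ht₀.le
  refine ⟨v, subset_inter ?_ ?_, hxv ▸ htρ ▸ mul_le_mul_of_nonneg_left hxz ht₀.le, hxv.le, ?_, ?_⟩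
  · exact (ball_subset_ball (by linarith)).trans
      (htρ ▸ h₁.ball_lineMap_subset hx (hz.trans inter_subset_left) ht₀ ht₁)
  · exact (ball_subset_ball' (by linarith)).trans
      (htρ ▸ h₂.ball_lineMap_subset hy (hz.trans inter_subset_right) ht₀ ht₁)
  · linarith [dist_triangle y v v', dist_comm v v']
  · linarith [dist_triangle y v' v, dist_comm v v']

end ConvexBall

section IntersectionGraph

variable {ι X : Type*}

def intersectionGraph (K : ι → Set X) : SimpleGraph ι :=
  SimpleGraph.fromRel fun i j => (K i ∩ K j).Nonempty

theorem intersectionGraph_adj {K : ι → Set X} {i j : ι} :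
    (intersectionGraph K).Adj i j ↔ i ≠ j ∧ (K i ∩ K j).Nonempty := by
  rw [intersectionGraph, SimpleGraph.fromRel_adj, inter_comm (K j), or_self]

theorem intersectionGraph_reachable_of_mem {K : ι → Set X} {i j : ι} {x : X} (hi : x ∈ K i)
    (hj : x ∈ K j) : (intersectionGraph K).Reachable i j := by
  obtain rfl | hij := eq_or_ne i j
  · rfl
  · exact (intersectionGraph_adj.2 ⟨hij, x, hi, hj⟩).reachable

theorem IsPreconnected.intersectionGraph_reachable [TopologicalSpace X] {K : ι → Set X}
    (hK : ∀ i, IsOpen (K i)) (hconn : IsPreconnected (⋃ i, K i)) {i j : ι} {x y : X}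
    (hx : x ∈ K i) (hy : y ∈ K j) : (intersectionGraph K).Reachable i j := by
  let P : X → X → Prop := fun u v =>
    ∀ i j, u ∈ K i → v ∈ K j → (intersectionGraph K).Reachable i j
  refine hconn.induction₂ P (fun u hu => ?_) (fun u v w _ hv _ huv hvw i k hu hw => ?_)
    (fun u v _ _ huv i j hv hu => (huv j i hu hv).symm) (mem_iUnion_of_mem i hx)
    (mem_iUnion_of_mem j hy) i j hx hy
  · obtain ⟨k, hk⟩ := mem_iUnion.1 hu
    filter_upwards [mem_nhdsWithin_of_mem_nhds ((hK k).mem_nhds hk)] with v hv i j hui hvj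
    exact (intersectionGraph_reachable_of_mem hui hk).trans
      (intersectionGraph_reachable_of_mem hv hvj)
  · obtain ⟨j, hj⟩ := mem_iUnion.1 hv
    exact (huv i j hu hj).trans (hvw j k hj hw)

end IntersectionGraph

section CubeChain

variable {d : ℕ}

theorem mem_visible_of_convex {D K : Set (Euc d)} (hK : Convex ℝ K) (hKD : K ⊆ D)
    {x y : Euc d} (hx : x ∈ K) (hy : y ∈ K) : y ∈ visible D x :=
  ⟨hKD hy, fun t ht => hKD (hK hx hy ht.1.le (sub_nonneg.2 ht.2.le) (add_sub_cancel t 1))⟩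

theorem isOpen_visible {D : Set (Euc d)} (hD : IsOpen D) {x : Euc d} (hx : x ∈ D) :
    IsOpen (visible D x) := by
  have hvis : visible D x = {y | ∀ t ∈ Icc (0 : ℝ) 1, t • x + (1 - t) • y ∈ D} := by
    ext y
    refine ⟨fun hy t ht => ?_, fun hy =>
      ⟨by simpa using hy 0 ⟨le_rfl, zero_le_one⟩, fun t ht => hy t (Ioo_subset_Icc_self ht)⟩⟩
    rcases eq_endpoints_or_mem_Ioo_of_mem_Icc ht with rfl | rfl | ht
    · simpa using hy.1
    · simpa using hx
    · exact hy.2 t ht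
  rw [hvis, isOpen_iff_eventually]
  intro y hy
  refine isCompact_Icc.eventually_forall_of_forall_eventually fun t ht => ?_
  have hcont : Continuous fun z : Euc d × ℝ => z.2 • x + (1 - z.2) • z.1 := by fun_prop
  exact hcont.continuousAt.preimage_mem_nhds (hD.mem_nhds (hy t ht))

theorem conditionB_of_subsingleton [Subsingleton (Euc d)] (D : Set (Euc d)) : ConditionB D := by
  have hvis : ∀ x, D \ visible D x = ∅ := fun x => sdiff_eq_empty.2 fun y hy =>
    ⟨hy, fun t _ => by rwa [Subsingleton.elim (t • x + (1 - t) • y) y]⟩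
  exact ⟨1, 1, le_rfl, .of_forall fun x => by simp [hvis]⟩

theorem setDist_le_dist {A B : Set (Euc d)} {a b : Euc d} (ha : a ∈ A) (hb : b ∈ B) :
    setDist A B ≤ dist a b :=
  csInf_le ⟨0, forall_mem_image2.2 fun _ _ _ _ => dist_nonneg⟩ (mem_image2_of_mem ha hb)

theorem le_setDist {A B : Set (Euc d)} {r : ℝ} (hA : A.Nonempty) (hB : B.Nonempty)
    (h : ∀ a ∈ A, ∀ b ∈ B, r ≤ dist a b) : r ≤ setDist A B :=
  le_csInf (hA.image2 hB) (forall_mem_image2.2 h)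

def cubeAt (p : Euc d) (s : ℝ) : Set (Euc d) :=
  {z | ∀ i, p i - s / 2 ≤ z i ∧ z i ≤ p i - s / 2 + s}

theorem isCube_cubeAt (p : Euc d) (s : ℝ) : IsCube (cubeAt p s) s :=
  ⟨p - WithLp.toLp 2 fun _ => s / 2, by ext; simp [cubeAt]⟩

theorem self_mem_cubeAt (p : Euc d) {s : ℝ} (hs : 0 ≤ s) : p ∈ cubeAt p s :=
  fun _ => ⟨by linarith, by linarith⟩

theorem dist_le_of_mem_cubeAt {p z : Euc d} {s : ℝ} (hs : 0 ≤ s) (hz : z ∈ cubeAt p s) :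
    dist z p ≤ s / 2 * √d := by
  have hcoord : ∀ i, dist (z i) (p i) ^ 2 ≤ (s / 2) ^ 2 := fun i => by
    rw [Real.dist_eq, sq_abs]
    exact sq_le_sq' (by linarith [hz i]) (by linarith [hz i])
  calc dist z p = √(∑ i, dist (z i) (p i) ^ 2) := EuclideanSpace.dist_eq z p
    _ ≤ √(∑ _i : Fin d, (s / 2) ^ 2) := Real.sqrt_le_sqrt (Finset.sum_le_sum fun i _ => hcoord i)
    _ = s / 2 * √d := by
      rw [Finset.sum_const, Finset.card_univ, Fintype.card_fin, nsmul_eq_mul,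
        Real.sqrt_mul (Nat.cast_nonneg d), Real.sqrt_sq (by linarith), mul_comm]

theorem cubeAt_subset_ball {p : Euc d} {s ε : ℝ} (hs : 0 ≤ s) (h : s / 2 * √d < ε) :
    cubeAt p s ⊆ ball p ε :=
  fun _ hz => (dist_le_of_mem_cubeAt hs hz).trans_lt h

/- `ConditionB D` unfolds to `∃ N c, 1 ≤ c ∧ ∀ᵐ x ∂(volume.restrict D),
∀ᵐ y ∂(volume.restrict (D \ visible D x)), CubeChain D N c x y`. -/
def CubeChain (D : Set (Euc d)) (N : ℕ) (c : ℝ) (x y : Euc d) : Prop :=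
  ∃ m : ℕ, 1 ≤ m ∧ m ≤ N ∧ ∃ Q : ℕ → Set (Euc d), ∃ l : ℕ → ℝ,
    (∀ i < m, Q i ⊆ D ∧ IsCube (Q i) (l i) ∧
      c⁻¹ * ‖x - y‖ ≤ l i ∧ l i ≤ c * ‖x - y‖) ∧
    Q 0 ⊆ visible D x ∧ Q (m - 1) ⊆ visible D y ∧
    c⁻¹ * ‖x - y‖ ≤ Metric.infDist x (Q 0) ∧ Metric.infDist x (Q 0) ≤ c * ‖x - y‖ ∧
    c⁻¹ * ‖x - y‖ ≤ Metric.infDist y (Q (m - 1)) ∧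
    Metric.infDist y (Q (m - 1)) ≤ c * ‖x - y‖ ∧
    ∀ i, i + 1 < m → Q (i + 1) ⊆ (⋂ z ∈ Q i, visible D z) ∧
      c⁻¹ * ‖x - y‖ ≤ setDist (Q i) (Q (i + 1)) ∧ setDist (Q i) (Q (i + 1)) ≤ c * ‖x - y‖

theorem cubeChain_of_centers {D : Set (Euc d)} {N m : ℕ} {c s : ℝ} {x y : Euc d}
    (p : ℕ → Euc d) (hm : 1 ≤ m) (hmN : m ≤ N) (hs : 0 ≤ s)
    (hs₁ : c⁻¹ * dist x y ≤ s) (hs₂ : s ≤ c * dist x y)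
    (hD : ∀ i < m, cubeAt (p i) s ⊆ D)
    (hx : cubeAt (p 0) s ⊆ visible D x) (hy : cubeAt (p (m - 1)) s ⊆ visible D y)
    (hvis : ∀ i, i + 1 < m → cubeAt (p (i + 1)) s ⊆ ⋂ z ∈ cubeAt (p i) s, visible D z)
    (hx₁ : c⁻¹ * dist x y + s / 2 * √d ≤ dist x (p 0)) (hx₂ : dist x (p 0) ≤ c * dist x y)
    (hy₁ : c⁻¹ * dist x y + s / 2 * √d ≤ dist y (p (m - 1)))
    (hy₂ : dist y (p (m - 1)) ≤ c * dist x y)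
    (hp₁ : ∀ i, i + 1 < m → c⁻¹ * dist x y + s * √d ≤ dist (p i) (p (i + 1)))
    (hp₂ : ∀ i, i + 1 < m → dist (p i) (p (i + 1)) ≤ c * dist x y) :
    CubeChain D N c x y := by
  have infDist_cube : ∀ w k, c⁻¹ * dist x y + s / 2 * √d ≤ dist w (p k) →
      dist w (p k) ≤ c * dist x y → c⁻¹ * dist x y ≤ infDist w (cubeAt (p k) s) ∧
        infDist w (cubeAt (p k) s) ≤ c * dist x y := fun w k h₁ h₂ =>
    ⟨(le_infDist ⟨_, self_mem_cubeAt _ hs⟩).2 fun q hq => by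
        linarith [dist_triangle w q (p k), dist_le_of_mem_cubeAt hs hq],
      (infDist_le_dist_of_mem (self_mem_cubeAt _ hs)).trans h₂⟩
  unfold CubeChain
  rw [← dist_eq_norm]
  refine ⟨m, hm, hmN, fun i => cubeAt (p i) s, fun _ => s,
    fun i hi => ⟨hD i hi, isCube_cubeAt _ _, hs₁, hs₂⟩, hx, hy,
    (infDist_cube x 0 hx₁ hx₂).1, (infDist_cube x 0 hx₁ hx₂).2,
    (infDist_cube y _ hy₁ hy₂).1, (infDist_cube y _ hy₁ hy₂).2,
    fun i hi => ⟨hvis i hi, ?_, ?_⟩⟩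
  · refine le_setDist ⟨_, self_mem_cubeAt _ hs⟩ ⟨_, self_mem_cubeAt _ hs⟩ fun a ha b hb => ?_
    linarith [hp₁ i hi, dist_triangle4 (p i) a b (p (i + 1)), dist_le_of_mem_cubeAt hs ha,
      dist_le_of_mem_cubeAt hs hb, dist_comm a (p i)]
  · exact (setDist_le_dist (self_mem_cubeAt _ hs) (self_mem_cubeAt _ hs)).trans (hp₂ i hi)

theorem cubeChain_of_ball {D K₁ K₂ : Set (Euc d)} (h₁ : Convex ℝ K₁) (h₂ : Convex ℝ K₂)
    (h₁D : K₁ ⊆ D) (h₂D : K₂ ⊆ D) {N : ℕ} (hN : 1 ≤ N) {x y v : Euc d} {c : ℝ}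
    (hx : x ∈ K₁) (hy : y ∈ K₂) (hr : 0 < dist x y) (hv : ball v (2 * dist x y) ⊆ K₁ ∩ K₂)
    (hxv : 2 * dist x y ≤ dist x v) (hxv' : dist x v ≤ c * dist x y)
    (hyv : 2 * dist x y ≤ dist y v) (hyv' : dist y v ≤ c * dist x y) (hc : √d + 1 ≤ c) :
    CubeChain D N c x y := by
  have hB : 1 ≤ √d + 1 := le_add_of_nonneg_left (Real.sqrt_nonneg _)
  have hc₀ : 0 < c := by linarith
  set s := dist x y / (√d + 1)
  have hs : 0 ≤ s := by positivity
  have hsr : s ≤ dist x y := div_le_self hr.le hB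
  have hsd : s * √d ≤ dist x y := by
    rw [div_mul_eq_mul_div, div_le_iff₀ (by linarith)]
    nlinarith
  have hcinv : c⁻¹ * dist x y ≤ s := by
    rw [inv_mul_le_iff₀ hc₀, mul_div_assoc', le_div_iff₀ (by linarith), mul_comm]
    exact mul_le_mul_of_nonneg_right hc hr.le
  have hcube : cubeAt v s ⊆ K₁ ∩ K₂ := (cubeAt_subset_ball hs (by linarith)).trans hv
  exact cubeChain_of_centers (fun _ => v) le_rfl hN hs hcinv
    (hsr.trans (le_mul_of_one_le_left hr.le (hB.trans hc)))
    (fun _ _ => hcube.trans (inter_subset_left.trans h₁D))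
    (fun _ hq => mem_visible_of_convex h₁ h₁D hx (hcube hq).1)
    (fun _ hq => mem_visible_of_convex h₂ h₂D hy (hcube hq).2)
    (fun _ h => by omega) (by linarith) hxv' (by linarith) hyv'
    (fun _ h => by omega) (fun _ h => by omega)

theorem cubeChain_of_center_chain {ι : Type*} {D : Set (Euc d)} {K : ι → Set (Euc d)}
    (hconv : ∀ i, Convex ℝ (K i)) (hKD : ∀ i, K i ⊆ D) {R : ℝ}
    (hR : ∀ u ∈ D, ∀ v ∈ D, dist u v ≤ R) {N L : ℕ} (hLN : L + 2 ≤ N) {q : ℕ → Euc d}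
    {k : ℕ → ι} {x y : Euc d} {ρ s c : ℝ} (hx : x ∈ K (k 0)) (hy : y ∈ K (k L))
    (hq : ∀ j ≤ L, ball (q j) ρ ⊆ K (k j) ∧ ball (q (j + 1)) ρ ⊆ K (k j) ∧
      ρ ≤ dist (q j) (q (j + 1)))
    (hxq : ρ / 2 ≤ dist x (q 0)) (hyq : ρ / 2 ≤ dist y (q (L + 1))) (hρ : 0 < ρ) (hs : 0 ≤ s)
    (hsρ : s * √d ≤ ρ / 4) (hs₁ : c⁻¹ * dist x y ≤ s) (hs₂ : s ≤ c * dist x y)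
    (hcρ : c⁻¹ * dist x y ≤ ρ / 4) (hRc : R ≤ c * dist x y) :
    CubeChain D N c x y := by
  have hcube : ∀ j, cubeAt (q j) s ⊆ ball (q j) ρ := fun j =>
    cubeAt_subset_ball hs (by linarith)
  have hcubeD : ∀ j ≤ L + 1, cubeAt (q j) s ⊆ D := by
    intro j hj
    rcases hj.lt_or_eq with hj | rfl
    · exact ((hcube j).trans (hq j (by omega)).1).trans (hKD _)
    · exact ((hcube _).trans (hq L le_rfl).2.1).trans (hKD _)
  have hqD : ∀ j ≤ L + 1, q j ∈ D := fun j hj => hcubeD j hj (self_mem_cubeAt _ hs)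
  have hvis : ∀ {i z w}, z ∈ K i → w ∈ K i → w ∈ visible D z :=
    fun hz hw => mem_visible_of_convex (hconv _) (hKD _) hz hw
  refine cubeChain_of_centers q (m := L + 1 + 1) (by omega) hLN hs hs₁ hs₂
    (fun j hj => hcubeD j (by omega))
    (fun w hw => hvis hx ((hcube 0).trans (hq 0 (by omega)).1 hw))
    (fun w hw => hvis hy ((hcube _).trans (hq L le_rfl).2.1 hw))
    (fun j hj w hw => mem_iInter₂.2 fun z hz =>
      hvis ((hcube j).trans (hq j (by omega)).1 hz) ((hcube _).trans (hq j (by omega)).2.1 hw))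
    (by linarith) ((hR _ (hKD _ hx) _ (hqD 0 (by omega))).trans hRc)
    (by rw [Nat.add_sub_cancel]; linarith) ((hR _ (hKD _ hy) _ (hqD _ le_rfl)).trans hRc)
    (fun j hj => by linarith [(hq j (by omega)).2.2])
    (fun j hj => (hR _ (hqD j (by omega)) _ (hqD (j + 1) (by omega))).trans hRc)

end CubeChain

section Pieces

/- A center `p (i, j, β)` marks the overlap `K i ∩ K j`; the flag `β` provides two distinct
centers in each piece `K i = K i ∩ K i`, so that one of them is far from any given point. -/
variable {d n : ℕ} {K : Fin n → Set (Euc d)} {p : Fin n × Fin n × Bool → Euc d} {ρ : ℝ}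

theorem exists_center_chain
    (hball : ∀ e, (K e.1 ∩ K e.2.1).Nonempty → ball (p e) ρ ⊆ K e.1 ∩ K e.2.1)
    (hsep : Pairwise fun e e' => ρ ≤ dist (p e) (p e'))
    {a b : Fin n} (hab : a ≠ b) (hreach : (intersectionGraph K).Reachable a b)
    {x y : Euc d} (hx : x ∈ K a) (hy : y ∈ K b) :
    ∃ L < n, ∃ q : ℕ → Euc d, ∃ k : ℕ → Fin n, x ∈ K (k 0) ∧ y ∈ K (k L) ∧
      (∀ j ≤ L, ball (q j) ρ ⊆ K (k j) ∧ ball (q (j + 1)) ρ ⊆ K (k j) ∧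
        ρ ≤ dist (q j) (q (j + 1))) ∧
      ρ / 2 ≤ dist x (q 0) ∧ ρ / 2 ≤ dist y (q (L + 1)) := by
  have hfar : ∀ (w : Euc d) (i : Fin n), ∃ β, ρ / 2 ≤ dist w (p (i, i, β)) := fun w i => by
    by_contra! h
    linarith [h true, h false, hsep (show (i, i, true) ≠ (i, i, false) by simp),
      dist_triangle_left (p (i, i, true)) (p (i, i, false)) w]
  obtain ⟨βx, hβx⟩ := hfar x a
  obtain ⟨βy, hβy⟩ := hfar y b
  obtain ⟨W, hW⟩ := hreach.some.toPath
  set L := W.length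
  set k := W.getVert
  have hk0 : k 0 = a := W.getVert_zero
  have hkL : ∀ j, L ≤ j → k j = b := fun j hj => W.getVert_of_length_le hj
  have hL : 0 < L := Nat.pos_of_ne_zero fun h => hab (W.eq_of_length_eq_zero h)
  have hadj : ∀ j < L, k j ≠ k (j + 1) ∧ (K (k j) ∩ K (k (j + 1))).Nonempty :=
    fun j hj => intersectionGraph_adj.1 (W.adj_getVert_succ hj)
  -- `idx j` marks the overlap of the `(j - 1)`-st and `j`-th pieces of the path; at `j = 0` and
  -- `j = L + 1`, truncated subtraction and the saturation of `getVert` make it a single piece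
  set idx : ℕ → Fin n × Fin n × Bool := fun j => (k (j - 1), k j, if j = 0 then βx else βy)
  have hq : ∀ j ≤ L + 1, ball (p (idx j)) ρ ⊆ K (k (j - 1)) ∩ K (k j) := by
    intro j hj
    refine hball (idx j) ?_
    rcases Nat.eq_zero_or_pos j with rfl | hj0
    · exact ⟨x, by simpa [idx, hk0] using hx, by simpa [idx, hk0] using hx⟩
    rcases hj.lt_or_eq with hjL | rfl
    · simpa [idx, Nat.sub_add_cancel hj0] using (hadj (j - 1) (by omega)).2
    · exact ⟨y, by simpa [idx, hkL L le_rfl] using hy,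
        by simpa [idx, hkL (L + 1) (by omega)] using hy⟩
  have hidx : ∀ j ≤ L, idx j ≠ idx (j + 1) := by
    rintro (_ | j) hj h
    · exact (hadj 0 hL).1 (by simpa [idx] using congrArg (·.2.1) h)
    · exact (hadj j (by omega)).1 (by simpa [idx] using congrArg (·.1) h)
  refine ⟨L, hW.length_lt.trans_eq (Fintype.card_fin n), fun j => p (idx j), k, hk0 ▸ hx,
    hkL L le_rfl ▸ hy, fun j hj => ⟨(hq j (by omega)).trans inter_subset_right,
      (hq (j + 1) (by omega)).trans inter_subset_left, hsep (hidx j hj)⟩, ?_, ?_⟩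
  · simpa [idx, hk0] using hβx
  · simpa [idx, hkL L le_rfl, hkL (L + 1) (by omega)] using hβy

theorem cubeChain_of_dist_le (hconv : ∀ i, Convex ℝ (K i))
    (hball : ∀ e, (K e.1 ∩ K e.2.1).Nonempty → ball (p e) ρ ⊆ K e.1 ∩ K e.2.1) {N : ℕ}
    (hN : 1 ≤ N) {R θ c : ℝ} (hR : ∀ u ∈ ⋃ i, K i, ∀ v ∈ ⋃ i, K i, dist u v ≤ R)
    (hθρ : 3 * θ ≤ ρ)
    (hmeet : ∀ i j, ∀ u ∈ K i, ∀ v ∈ K j, dist u v ≤ θ → (K i ∩ K j).Nonempty)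
    (hc : √d + 1 + 3 * R / ρ ≤ c) {x y : Euc d} (hx : x ∈ ⋃ i, K i) (hy : y ∈ ⋃ i, K i)
    (hxy : y ∉ visible (⋃ i, K i) x) (hr : dist x y ≤ θ) : CubeChain (⋃ i, K i) N c x y := by
  obtain ⟨a, hxa⟩ := mem_iUnion.1 hx
  obtain ⟨b, hyb⟩ := mem_iUnion.1 hy
  have hnot : ∀ i, x ∈ K i → y ∉ K i := fun i hxi hyi =>
    hxy (mem_visible_of_convex (hconv i) (subset_iUnion K i) hxi hyi)
  set z := p (a, b, false)
  have hz : ball z ρ ⊆ K a ∩ K b := hball (a, b, false) (hmeet a b x hxa y hyb hr)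
  have hxz : ρ ≤ dist x z := not_lt.1 fun h => hnot b (hz (mem_ball.2 h)).2 hyb
  have hyz : ρ ≤ dist y z := not_lt.1 fun h => hnot a hxa (hz (mem_ball.2 h)).1
  have hr₀ : 0 < dist x y := dist_pos.2 fun h => hnot a hxa (h ▸ hxa)
  have hρ : 0 < ρ := by linarith
  have hzD : z ∈ ⋃ i, K i := subset_iUnion K a (hz (mem_ball_self hρ)).1
  obtain ⟨v, hv, hxv₁, hxv₂, hyv₁, hyv₂⟩ :=
    exists_ball_subset_inter_near (hconv a) (hconv b) hxa hyb hz hxz hyz hr₀ (by linarith)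
  have hR₀ : 0 ≤ R := dist_nonneg.trans (hR x hx x hx)
  have hfar : 3 * dist x y / ρ * R + dist x y ≤ c * dist x y :=
    calc 3 * dist x y / ρ * R + dist x y = (3 * R / ρ + 1) * dist x y := by ring
      _ ≤ c * dist x y := by gcongr; linarith [Real.sqrt_nonneg d]
  refine cubeChain_of_ball (hconv a) (hconv b) (subset_iUnion K a) (subset_iUnion K b) hN hxa
    hyb hr₀ hv (by linarith) ?_ hyv₁ ?_ (by linarith [show 0 ≤ 3 * R / ρ by positivity])
  · calc dist x v ≤ 3 * dist x y / ρ * R := hxv₂.trans (by gcongr; exact hR x hx z hzD)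
      _ ≤ c * dist x y := by linarith
  · calc dist y v ≤ 3 * dist x y / ρ * R + dist x y := hyv₂.trans (by gcongr; exact hR y hy z hzD)
      _ ≤ c * dist x y := hfar

theorem cubeChain_of_lt_dist (hopen : ∀ i, IsOpen (K i)) (hconv : ∀ i, Convex ℝ (K i))
    (hconn : IsPreconnected (⋃ i, K i))
    (hball : ∀ e, (K e.1 ∩ K e.2.1).Nonempty → ball (p e) ρ ⊆ K e.1 ∩ K e.2.1)
    (hsep : Pairwise fun e e' => ρ ≤ dist (p e) (p e')) {R θ c : ℝ}
    (hR : ∀ u ∈ ⋃ i, K i, ∀ v ∈ ⋃ i, K i, dist u v ≤ R) (hθ : 0 < θ) (hθρ : 3 * θ ≤ ρ)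
    (hc : 1 + 4 * (√d + 1) * R / θ ≤ c) {x y : Euc d} (hx : x ∈ ⋃ i, K i)
    (hy : y ∈ ⋃ i, K i) (hxy : y ∉ visible (⋃ i, K i) x) (hr : θ < dist x y) :
    CubeChain (⋃ i, K i) (n + 1) c x y := by
  obtain ⟨a, hxa⟩ := mem_iUnion.1 hx
  obtain ⟨b, hyb⟩ := mem_iUnion.1 hy
  have hab : a ≠ b := by
    rintro rfl
    exact hxy (mem_visible_of_convex (hconv a) (subset_iUnion K a) hxa hyb)
  obtain ⟨L, hL, q, k, hxk, hyk, hq, hxq, hyq⟩ :=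
    exists_center_chain hball hsep hab (hconn.intersectionGraph_reachable hopen hxa hyb) hxa hyb
  have hR₀ : 0 ≤ R := dist_nonneg.trans (hR x hx x hx)
  set B := √d + 1
  have hB : 1 ≤ B := le_add_of_nonneg_left (Real.sqrt_nonneg _)
  have hc₁ : 1 ≤ c := by linarith [show 0 ≤ 4 * B * R / θ by positivity]
  set s := θ / (4 * B)
  have hs : 0 < s := by positivity
  have hsθ : s ≤ θ / 4 := div_le_div_of_nonneg_left hθ.le (by norm_num) (by linarith)
  have hsd : s * √d ≤ θ / 4 :=
    calc s * √d ≤ s * B := by gcongr; linarith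
      _ = θ / 4 := by simp only [s]; field_simp
  have hRc : R ≤ c * dist x y :=
    calc R ≤ 4 * B * R / θ * θ := by rw [div_mul_cancel₀ _ hθ.ne']; nlinarith
      _ ≤ c * dist x y := by gcongr; linarith
  have hcinv : c⁻¹ * dist x y ≤ s := by
    rw [inv_mul_le_iff₀ (by linarith)]
    calc dist x y ≤ R := hR x hx y hy
      _ = 4 * B * R / θ * s := by simp only [s]; field_simp
      _ ≤ c * s := by gcongr; linarith
  exact cubeChain_of_center_chain hconv (subset_iUnion K) hR (by omega) hxk hyk hq hxq hyq
    (by linarith) hs.le (by linarith) hcinv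
    ((hsθ.trans (by linarith)).trans (le_mul_of_one_le_left dist_nonneg hc₁)) (by linarith) hRc

end Pieces

/-- remark after Condition B: a connected finite union of open bounded
convex sets `K_i` such that any two pieces have either disjoint closures or an
intersection of positive measure satisfies Condition B. -/
theorem stmt19 (d n : ℕ) (K : Fin n → Set (Euc d))
    (hopen : ∀ i, IsOpen (K i)) (hbd : ∀ i, Bornology.IsBounded (K i))
    (hconv : ∀ i, Convex ℝ (K i))
    (hconn : IsConnected (⋃ i, K i))
    (hpair : ∀ i j, i ≠ j →
      closure (K i) ∩ closure (K j) = ∅ ∨ 0 < volume (K i ∩ K j)) :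
    ConditionB (⋃ i, K i) := by
  rcases Nat.eq_zero_or_pos d with rfl | hd
  · exact conditionB_of_subsingleton _
  have : Nonempty (Fin d) := ⟨⟨0, hd⟩⟩
  have hDopen : IsOpen (⋃ i, K i) := isOpen_iUnion hopen
  obtain ⟨p, ρ, hρ, hball, hsep⟩ := exists_separated_centers
    fun e : Fin n × Fin n × Bool => (hopen e.1).inter (hopen e.2.1)
  have hpair' : ∀ i j, i ≠ j →
      Disjoint (closure (K i)) (closure (K j)) ∨ (K i ∩ K j).Nonempty := fun i j hij =>
    (hpair i j hij).imp disjoint_iff_inter_eq_empty.2 fun h => nonempty_of_measure_ne_zero h.ne'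
  obtain ⟨θ, hmeet, hθ, hθρ⟩ := ((eventually_inter_nonempty_of_dist_le hbd hpair').and
    (Ioo_mem_nhdsGT (by positivity : 0 < ρ / 3))).exists
  obtain ⟨R, hR⟩ := Metric.isBounded_iff.1 (Bornology.isBounded_iUnion.2 hbd)
  set c₁ := √d + 1 + 3 * R / ρ
  set c₂ := 1 + 4 * (√d + 1) * R / θ
  refine ⟨n + 1, max 1 (max c₁ c₂), le_max_left _ _, ?_⟩
  filter_upwards [ae_restrict_mem hDopen.measurableSet] with x hx
  filter_upwards [ae_restrict_mem (hDopen.measurableSet.diff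
    (isOpen_visible hDopen hx).measurableSet)] with y ⟨hy, hxy⟩
  rcases le_or_gt (dist x y) θ with hr | hr
  · exact cubeChain_of_dist_le hconv hball (by omega) (fun u hu v hv => hR hu hv)
      (by linarith) hmeet ((le_max_left _ _).trans (le_max_right _ _)) hx hy hxy hr
  · exact cubeChain_of_lt_dist hopen hconv hconn.isPreconnected hball hsep
      (fun u hu v hv => hR hu hv) hθ (by linarith) ((le_max_right _ _).trans (le_max_right _ _))
      hx hy hxy hr

end
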